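/- arXiv:1412.0607 — 6 statements merged into one kernel-verified Lean document; each statement's English description precedes it below -/
import Mathlib

section
/- If m minimizes the ℓ1 trend filtering objective F, then the residuals satisfy the two moment conditions Σ_{t=1}^N (y_t - m_t) = 0 and Σ_{t=1}^N t (y_t - m_t) = 0. -/
open Finset

noncomputable def vext (N : ℕ) (m : Fin N → ℝ) : ℕ → ℝ :=
  fun t => if h : t < N then m ⟨t, h⟩ else 0

noncomputable def tv2 (N : ℕ) (m : Fin N → ℝ) : ℝ :=
  ∑ t ∈ Finset.Ico 2 N, |vext N m t - 2 * vext N m (t - 1) + vext N m (t - 2)|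

noncomputable def fitErr (N : ℕ) (y m : Fin N → ℝ) : ℝ :=
  ∑ t : Fin N, (y t - m t) ^ 2

noncomputable def Fobj (N : ℕ) (lam : ℝ) (y m : Fin N → ℝ) : ℝ :=
  (1 / 2) * fitErr N y m + lam * tv2 N m

lemma tv2_affine_shift (N : ℕ) (m : Fin N → ℝ) (α β : ℝ) :
    tv2 N (fun t => m t + (α + β * ((t : ℕ) : ℝ))) = tv2 N m := by
  unfold tv2
  refine Finset.sum_congr rfl fun t ht => ?_
  simp only [Finset.mem_Ico] at ht
  obtain ⟨h2, hN⟩ := ht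
  have h1 : t - 1 < N := by omega
  have h0 : t - 2 < N := by omega
  have htN : t < N := hN
  have c1 : ((t - 1 : ℕ) : ℝ) = (t : ℝ) - 1 := by
    have : (1:ℕ) ≤ t := by omega
    push_cast [this]; ring
  have c2 : ((t - 2 : ℕ) : ℝ) = (t : ℝ) - 2 := by
    push_cast [h2]; ring
  unfold vext
  rw [dif_pos htN, dif_pos h1, dif_pos h0, dif_pos htN, dif_pos h1, dif_pos h0]
  simp only [c1, c2]
  ring_nf

lemma key_lemma (N : ℕ) (y : Fin N → ℝ) (lam : ℝ)
    (m : Fin N → ℝ) (hmin : ∀ m' : Fin N → ℝ, Fobj N lam y m ≤ Fobj N lam y m')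
    (α β : ℝ) :
    (∑ t : Fin N, (α + β * ((t : ℕ) : ℝ)) * (y t - m t)) = 0 := by
  set a : Fin N → ℝ := fun t => α + β * ((t : ℕ) : ℝ) with ha
  set S := ∑ t : Fin N, a t * (y t - m t) with hS
  set C := ∑ t : Fin N, (a t) ^ 2 with hC
  have hC0 : 0 ≤ C := Finset.sum_nonneg fun t _ => sq_nonneg _
  set ε := S / (C + 1) with hε
  have hmin' := hmin (fun t => m t + (ε * α + ε * β * ((t : ℕ) : ℝ)))
  have htv : tv2 N (fun t => m t + (ε * α + ε * β * ((t : ℕ) : ℝ))) = tv2 N m :=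
    tv2_affine_shift N m (ε * α) (ε * β)
  unfold Fobj at hmin'
  rw [htv] at hmin'
  have hfit : fitErr N y m ≤ fitErr N y (fun t => m t + (ε * α + ε * β * ((t : ℕ) : ℝ))) := by
    nlinarith [hmin']
  unfold fitErr at hfit
  have hexp : ∑ t : Fin N, (y t - (m t + (ε * α + ε * β * ((t : ℕ) : ℝ)))) ^ 2
      = ∑ t : Fin N, ((y t - m t) ^ 2 - 2 * ε * (a t * (y t - m t)) + ε ^ 2 * (a t) ^ 2) := by
    refine Finset.sum_congr rfl fun t _ => ?_
    simp only [ha]; ring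
  rw [hexp] at hfit
  rw [Finset.sum_add_distrib, Finset.sum_sub_distrib, ← Finset.mul_sum, ← Finset.mul_sum] at hfit
  rw [← hS, ← hC] at hfit
  have hq : 0 ≤ - 2 * ε * S + ε ^ 2 * C := by linarith
  have : S = 0 := by
    rw [hε] at hq
    have h1 : (0:ℝ) < C + 1 := by linarith
    rw [div_pow] at hq
    field_simp at hq
    rw [zero_mul] at hq
    have hS2 : S ^ 2 ≤ 0 := by nlinarith [hC0, sq_nonneg S]
    have : S ^ 2 = 0 := le_antisymm hS2 (sq_nonneg S)
    exact pow_eq_zero_iff (two_ne_zero) |>.mp this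
  simpa [hS, ha] using this

noncomputable def zdual (N : ℕ) (y m : Fin N → ℝ) (t : ℕ) : ℝ :=
  ∑ i ∈ Finset.Ico 1 t, ((t : ℝ) - (i : ℝ)) * (vext N m (i - 1) - vext N y (i - 1))

theorem trend_filter_residual_moment_conditions
    (N : ℕ) (hN : 3 ≤ N) (y : Fin N → ℝ) (lam : ℝ) (hlam : 0 ≤ lam)
    (m : Fin N → ℝ) (hmin : ∀ m' : Fin N → ℝ, Fobj N lam y m ≤ Fobj N lam y m') :
    (∑ t : Fin N, (y t - m t)) = 0 ∧
    (∑ t : Fin N, ((t : ℝ) + 1) * (y t - m t)) = 0 := by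
  constructor
  · have h := key_lemma N y lam m hmin 1 0
    simpa using h
  · have h := key_lemma N y lam m hmin 1 1
    rw [← h]
    refine Finset.sum_congr rfl fun t _ => ?_
    ring
end

section
/- If m minimizes the ℓ1 trend filtering objective F, then the dual variables z_t = Σ_{i=1}^{t-1} (t - i)(m_i - y_i) satisfy |z_t| ≤ λ for all t = 2, ..., N-1. -/
open Finset

lemma vext_lt {N : ℕ} (m : Fin N → ℝ) {s : ℕ} (h : s < N) : vext N m s = m ⟨s, h⟩ := by
  simp [vext, h]

lemma vext_add (N : ℕ) (m d : Fin N → ℝ) (ε : ℝ) (s : ℕ) :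
    vext N (fun j => m j + ε * d j) s = vext N m s + ε * vext N d s := by
  unfold vext; split <;> simp

theorem trend_filter_dual_in_tube
    (N : ℕ) (hN : 3 ≤ N) (y : Fin N → ℝ) (lam : ℝ) (hlam : 0 ≤ lam)
    (m : Fin N → ℝ) (hmin : ∀ m' : Fin N → ℝ, Fobj N lam y m ≤ Fobj N lam y m') :
    ∀ t : ℕ, 2 ≤ t → t ≤ N - 1 → |zdual N y m t| ≤ lam := by
  intro t ht2 ht1
  have htN : t < N := by omega
  set d : Fin N → ℝ := fun j => max ((t : ℝ) - 1 - (j : ℝ)) 0 with hd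
  set S : ℝ := ∑ j : Fin N, d j * (m j - y j) with hS
  set C : ℝ := ∑ j : Fin N, d j ^ 2 with hC
  have hC0 : 0 < C := by
    have h1 : (1:ℝ) ≤ d ⟨0, by omega⟩ := by
      have h2 : (2:ℝ) ≤ (t:ℝ) := by exact_mod_cast ht2
      have h3 : ((⟨0, by omega⟩ : Fin N) : ℝ) = 0 := by simp
      have := le_max_left ((t:ℝ) - 1 - ((⟨0, by omega⟩ : Fin N) : ℝ)) 0
      simp only [hd]
      rw [h3] at this ⊢
      linarith
    rw [hC]
    apply Finset.sum_pos'
    · intro i _; positivity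
    · exact ⟨⟨0, by omega⟩, Finset.mem_univ _, by nlinarith⟩
  -- second difference of d is a delta at t
  have hdiff : ∀ s ∈ Finset.Ico 2 N,
      vext N d s - 2 * vext N d (s-1) + vext N d (s-2)
        = if s = t then 1 else 0 := by
    intro s hs
    rw [Finset.mem_Ico] at hs
    obtain ⟨hs2, hsN⟩ := hs
    have h1 : s - 1 < N := by omega
    have h2 : s - 2 < N := by omega
    rw [vext_lt d hsN, vext_lt d h1, vext_lt d h2]
    simp only [hd]
    have c1 : ((⟨s, hsN⟩ : Fin N) : ℝ) = (s : ℝ) := rfl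
    have c2 : ((⟨s-1, h1⟩ : Fin N) : ℝ) = (s : ℝ) - 1 := by
      show ((s - 1 : ℕ) : ℝ) = (s : ℝ) - 1
      push_cast [Nat.cast_sub (by omega : 1 ≤ s)]; ring
    have c3 : ((⟨s-2, h2⟩ : Fin N) : ℝ) = (s : ℝ) - 2 := by
      show ((s - 2 : ℕ) : ℝ) = (s : ℝ) - 2
      push_cast [Nat.cast_sub (by omega : 2 ≤ s)]; ring
    rw [c1, c2, c3]
    rcases lt_trichotomy s t with h | h | h
    · have hst : (s:ℝ) + 1 ≤ (t:ℝ) := by exact_mod_cast h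
      rw [if_neg (by omega), max_eq_left (by linarith), max_eq_left (by linarith),
        max_eq_left (by linarith)]
      ring
    · subst h
      rw [if_pos rfl, max_eq_right (by linarith), max_eq_right (by linarith),
        max_eq_left (by linarith)]
      ring
    · have hst : (t:ℝ) + 1 ≤ (s:ℝ) := by exact_mod_cast h
      rw [if_neg (by omega), max_eq_right (by linarith), max_eq_right (by linarith),
        max_eq_right (by linarith)]
      ring
  -- fit error expansion
  have hfit : ∀ ε : ℝ, fitErr N y (fun j => m j + ε * d j)
      = fitErr N y m + 2 * ε * S + ε^2 * C := by
    intro ε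
    simp only [fitErr, hS, hC]
    rw [show ∑ j : Fin N, (y j - (m j + ε * d j))^2
        = ∑ j : Fin N, ((y j - m j)^2 + 2 * ε * (d j * (m j - y j)) + ε^2 * (d j)^2) from
      Finset.sum_congr rfl (fun j _ => by ring)]
    rw [Finset.sum_add_distrib, Finset.sum_add_distrib, ← Finset.mul_sum, ← Finset.mul_sum]
  -- tv2 bound
  have htv : ∀ ε : ℝ, tv2 N (fun j => m j + ε * d j) ≤ tv2 N m + |ε| := by
    intro ε
    have hmem : t ∈ Finset.Ico 2 N := Finset.mem_Ico.mpr ⟨ht2, htN⟩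
    simp only [tv2]
    calc ∑ s ∈ Finset.Ico 2 N, |vext N (fun j => m j + ε * d j) s
            - 2 * vext N (fun j => m j + ε * d j) (s-1)
            + vext N (fun j => m j + ε * d j) (s-2)|
        = ∑ s ∈ Finset.Ico 2 N, |(vext N m s - 2 * vext N m (s-1) + vext N m (s-2))
            + ε * (if s = t then 1 else 0)| := by
          refine Finset.sum_congr rfl (fun s hs => ?_)
          rw [vext_add, vext_add, vext_add, ← hdiff s hs]
          ring_nf
      _ ≤ ∑ s ∈ Finset.Ico 2 N, (|vext N m s - 2 * vext N m (s-1) + vext N m (s-2)|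
            + |ε| * (if s = t then 1 else 0)) := by
          refine Finset.sum_le_sum (fun s hs => ?_)
          split_ifs with h
          · simpa using abs_add_le _ ε
          · simp
      _ = (∑ s ∈ Finset.Ico 2 N, |vext N m s - 2 * vext N m (s-1) + vext N m (s-2)|)
            + |ε| * ∑ s ∈ Finset.Ico 2 N, (if s = t then 1 else 0) := by
          rw [Finset.sum_add_distrib, Finset.mul_sum]
      _ = (∑ s ∈ Finset.Ico 2 N, |vext N m s - 2 * vext N m (s-1) + vext N m (s-2)|) + |ε| := by
          rw [Finset.sum_ite_eq' (Finset.Ico 2 N) t (fun _ => (1:ℝ)), if_pos hmem, mul_one]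
  -- key inequality from minimality
  have key : ∀ ε : ℝ, 0 ≤ ε * S + ε^2 * C / 2 + lam * |ε| := by
    intro ε
    have h1 := hmin (fun j => m j + ε * d j)
    simp only [Fobj] at h1
    rw [hfit ε] at h1
    have h2 : lam * tv2 N (fun j => m j + ε * d j) ≤ lam * (tv2 N m + |ε|) :=
      mul_le_mul_of_nonneg_left (htv ε) hlam
    nlinarith [h1, h2]
  -- S = zdual
  have hSz : S = zdual N y m t := by
    have hstep : zdual N y m t
        = ∑ j ∈ Finset.range (t-1), ((t:ℝ) - ((1 + j : ℕ) : ℝ))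
            * (vext N m j - vext N y j) := by
      rw [zdual, Finset.sum_Ico_eq_sum_range]
      simp only [Nat.add_sub_cancel_left]
    have hS2 : S = ∑ j ∈ Finset.range N, vext N d j * (vext N m j - vext N y j) := by
      rw [hS, ← Fin.sum_univ_eq_sum_range (fun j => vext N d j * (vext N m j - vext N y j)) N]
      refine Finset.sum_congr rfl (fun j _ => ?_)
      rw [vext_lt d j.isLt, vext_lt m j.isLt, vext_lt y j.isLt]
    rw [hS2, hstep]
    rw [← Finset.sum_subset (Finset.range_subset_range.mpr (by omega : t - 1 ≤ N))
      (fun j hjN hjt => ?_)]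
    · refine Finset.sum_congr rfl (fun j hj => ?_)
      rw [Finset.mem_range] at hj
      have hjN : j < N := by omega
      rw [vext_lt d hjN]
      simp only [hd]
      have cj : ((⟨j, hjN⟩ : Fin N) : ℝ) = (j : ℝ) := rfl
      have hjt : (j:ℝ) + 1 ≤ (t:ℝ) - 1 := by
        have h4 : j + 2 ≤ t := by omega
        have h5 : ((j:ℝ) + 2) ≤ (t:ℝ) := by exact_mod_cast h4
        linarith
      rw [cj, max_eq_left (by linarith)]
      push_cast
      ring
    · rw [Finset.mem_range, not_lt] at hjt
      have hjN' : j < N := Finset.mem_range.mp hjN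
      rw [vext_lt d hjN']
      simp only [hd]
      have cj : ((⟨j, hjN'⟩ : Fin N) : ℝ) = (j : ℝ) := rfl
      have : (t:ℝ) - 1 ≤ (j:ℝ) := by
        have : t - 1 ≤ j := hjt
        have h := Nat.cast_le (α := ℝ).mpr this
        push_cast [Nat.cast_sub (by omega : 1 ≤ t)] at h
        linarith
      rw [cj, max_eq_right (by linarith), zero_mul]
  -- conclude
  rw [← hSz, abs_le]
  constructor
  · by_contra hc
    push_neg at hc
    set e := (-S - lam)/C with he
    have he0 : 0 < e := div_pos (by linarith) hC0
    have heC : e * C = -S - lam := div_mul_cancel₀ _ (ne_of_gt hC0)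
    have hk := key e
    rw [abs_of_pos he0] at hk
    have h3 : e^2 * C = e * (-S - lam) := by rw [pow_two, mul_assoc, heC]
    nlinarith [mul_pos he0 (show (0:ℝ) < -S - lam by linarith)]
  · by_contra hc
    push_neg at hc
    set e := (S - lam)/C with he
    have he0 : 0 < e := div_pos (by linarith) hC0
    have heC : e * C = S - lam := div_mul_cancel₀ _ (ne_of_gt hC0)
    have hk := key (-e)
    rw [abs_neg, abs_of_pos he0] at hk
    have h3 : e^2 * C = e * (S - lam) := by rw [pow_two, mul_assoc, heC]
    nlinarith [mul_pos he0 (show (0:ℝ) < S - lam by linarith)]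
end

section
/- If m minimizes the ℓ1 trend filtering objective F and the dual variable z_t = Σ_{i=1}^{t-1}(t-i)(m_i - y_i) satisfies |z_t| < λ for some t with 2 ≤ t ≤ N-1, then m_{t+1} - 2 m_t + m_{t-1} = 0, i.e., m is locally affine at t. -/
open Finset

/-- left ramp direction: `max (t - 1 - j) 0`. -/
noncomputable def rampL (t : ℕ) : ℕ → ℝ := fun j => max ((t : ℝ) - 1 - (j : ℝ)) 0

lemma rampL_second_diff (t j : ℕ) (ht2 : 2 ≤ t) (hj : 2 ≤ j) :
    rampL t j - 2 * rampL t (j - 1) + rampL t (j - 2) = if j = t then 1 else 0 := by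
  have c1 : ((j - 1 : ℕ) : ℝ) = (j : ℝ) - 1 := by
    have : (1:ℕ) ≤ j := by omega
    push_cast [this]; ring
  have c2 : ((j - 2 : ℕ) : ℝ) = (j : ℝ) - 2 := by
    push_cast [hj]; ring
  simp only [rampL]
  rw [c1, c2]
  rcases lt_trichotomy j t with h | h | h
  · have hjt : (j : ℝ) + 1 ≤ (t : ℝ) := by exact_mod_cast h
    rw [if_neg (by omega)]
    rw [max_eq_left (by linarith), max_eq_left (by linarith), max_eq_left (by linarith)]
    ring
  · subst h
    rw [if_pos rfl]
    rw [max_eq_right (by linarith), max_eq_left (by linarith), max_eq_left (by linarith)]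
    ring
  · have hjt : (t : ℝ) + 1 ≤ (j : ℝ) := by exact_mod_cast h
    rw [if_neg (by omega)]
    rw [max_eq_right (by linarith), max_eq_right (by linarith), max_eq_right (by linarith)]
    ring

lemma rampL_zero (t j : ℕ) (hj : t - 1 ≤ j) : rampL t j = 0 := by
  have h1 : t ≤ j + 1 := by omega
  have : (t : ℝ) ≤ (j : ℝ) + 1 := by exact_mod_cast h1
  simp only [rampL]
  exact max_eq_right (by linarith)

theorem trend_filter_strict_tube_implies_affine
    (N : ℕ) (hN : 3 ≤ N) (y : Fin N → ℝ) (lam : ℝ) (hlam : 0 < lam)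
    (m : Fin N → ℝ) (hmin : ∀ m' : Fin N → ℝ, Fobj N lam y m ≤ Fobj N lam y m')
    (t : ℕ) (ht2 : 2 ≤ t) (htN : t ≤ N - 1)
    (hz : |zdual N y m t| < lam) :
    vext N m t - 2 * vext N m (t - 1) + vext N m (t - 2) = 0 := by
  have htN' : t < N := by omega
  set d : ℝ := vext N m t - 2 * vext N m (t - 1) + vext N m (t - 2) with hd
  set z : ℝ := zdual N y m t with hzdef
  set Q : ℝ := ∑ i : Fin N, (rampL t i) ^ 2 with hQdef
  have hQ0 : 0 ≤ Q := Finset.sum_nonneg fun i _ => sq_nonneg _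
  -- evaluation of vext on perturbed vectors
  have hvext' : ∀ (ε : ℝ) (j : ℕ) (hjN : j < N),
      vext N (fun i => m i + ε * rampL t i) j = vext N m j + ε * rampL t j := by
    intro ε j hjN
    simp [vext, hjN]
  -- total variation of perturbation
  have htv : ∀ ε : ℝ, tv2 N (fun i => m i + ε * rampL t i)
      = tv2 N m + (|d + ε| - |d|) := by
    intro ε
    have hterm : ∀ j ∈ Finset.Ico 2 N,
        |vext N (fun i => m i + ε * rampL t i) j
          - 2 * vext N (fun i => m i + ε * rampL t i) (j - 1)
          + vext N (fun i => m i + ε * rampL t i) (j - 2)|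
        = |vext N m j - 2 * vext N m (j - 1) + vext N m (j - 2)|
          + if j = t then |d + ε| - |d| else 0 := by
      intro j hj
      rw [Finset.mem_Ico] at hj
      rw [hvext' ε j hj.2, hvext' ε (j - 1) (by omega), hvext' ε (j - 2) (by omega)]
      have h2 := rampL_second_diff t j ht2 hj.1
      by_cases hjt : j = t
      · subst hjt
        rw [if_pos rfl] at h2 ⊢
        have e : vext N m j + ε * rampL j j - 2 * (vext N m (j - 1) + ε * rampL j (j - 1))
            + (vext N m (j - 2) + ε * rampL j (j - 2)) = d + ε := by
          rw [hd]; linear_combination ε * h2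
        rw [e]; ring
      · rw [if_neg hjt] at h2 ⊢
        have e : vext N m j + ε * rampL t j - 2 * (vext N m (j - 1) + ε * rampL t (j - 1))
            + (vext N m (j - 2) + ε * rampL t (j - 2))
            = vext N m j - 2 * vext N m (j - 1) + vext N m (j - 2) := by
          linear_combination ε * h2
        rw [e]; ring
    unfold tv2
    rw [Finset.sum_congr rfl hterm, Finset.sum_add_distrib, Finset.sum_ite_eq']
    rw [if_pos (Finset.mem_Ico.mpr ⟨ht2, htN'⟩)]
  -- fit error of perturbation
  have hfit : ∀ ε : ℝ, fitErr N y (fun i => m i + ε * rampL t i)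
      = fitErr N y m + ε * (2 * ∑ i : Fin N, (m i - y i) * rampL t i) + ε ^ 2 * Q := by
    intro ε
    rw [hQdef]
    unfold fitErr
    have e : ∀ i : Fin N, (y i - (m i + ε * rampL t i)) ^ 2
        = (y i - m i) ^ 2 + (ε * (2 * ((m i - y i) * rampL t i)) + ε ^ 2 * (rampL t i) ^ 2) := by
      intro i; ring
    rw [Finset.sum_congr rfl (fun i _ => e i), Finset.sum_add_distrib, Finset.sum_add_distrib,
      ← Finset.mul_sum, ← Finset.mul_sum, ← Finset.mul_sum]
    ring
  -- the inner product equals the dual variable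
  have hS : ∑ i : Fin N, (m i - y i) * rampL t i = z := by
    rw [hzdef]; unfold zdual
    have e1 : ∑ i : Fin N, (m i - y i) * rampL t i
        = ∑ j ∈ Finset.range N, (vext N m j - vext N y j) * rampL t j := by
      rw [← Fin.sum_univ_eq_sum_range (fun j => (vext N m j - vext N y j) * rampL t j) N]
      apply Finset.sum_congr rfl
      intro i _
      simp [vext, i.isLt]
    rw [e1]
    rw [← Finset.sum_subset (Finset.range_subset_range.mpr (show t - 1 ≤ N by omega))
      (fun x _ hx => by
        rw [Finset.mem_range, not_lt] at hx
        rw [rampL_zero t x hx, mul_zero])]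
    rw [Finset.sum_Ico_eq_sum_range]
    apply Finset.sum_congr rfl
    intro k hk
    rw [Finset.mem_range] at hk
    have hk1 : (k : ℝ) + 1 ≤ (t : ℝ) - 1 := by
      have : k + 2 ≤ t := by omega
      have := (Nat.cast_le (α := ℝ)).mpr this
      push_cast at this; linarith
    have e2 : rampL t k = (t : ℝ) - 1 - (k : ℝ) := max_eq_left (by linarith)
    have e3 : 1 + k - 1 = k := by omega
    rw [e3, e2]
    push_cast
    ring
  -- key variational inequality
  have key : ∀ ε : ℝ, 0 ≤ ε * z + ε ^ 2 / 2 * Q + lam * (|d + ε| - |d|) := by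
    intro ε
    have h1 := hmin (fun i => m i + ε * rampL t i)
    simp only [Fobj] at h1
    rw [hfit ε, htv ε, hS] at h1
    nlinarith [h1]
  -- conclude by contradiction
  by_contra hdne
  have hdpos : 0 < |d| := abs_pos.mpr hdne
  set c : ℝ := lam - |z| with hc
  have hcpos : 0 < c := by rw [hc]; linarith
  set δ : ℝ := min |d| (c / (Q + 1)) with hδ
  have hδpos : 0 < δ := lt_min hdpos (div_pos hcpos (by linarith))
  have hδd : δ ≤ |d| := min_le_left _ _
  have hδc : δ * (Q + 1) ≤ c := by
    have h := min_le_right |d| (c / (Q + 1))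
    have : δ ≤ c / (Q + 1) := h
    exact (le_div_iff₀ (by linarith)).mp this
  set ε : ℝ := if 0 < d then -δ else δ with hε
  have hεabs : |d + ε| = |d| - δ := by
    rcases lt_or_ge 0 d with h | h
    · rw [hε, if_pos h]
      rw [abs_of_pos h] at hδd ⊢
      rw [abs_of_nonneg (by linarith)]
      ring
    · have hdneg : d < 0 := lt_of_le_of_ne h hdne
      rw [hε, if_neg (not_lt.mpr h)]
      rw [abs_of_neg hdneg] at hδd ⊢
      rw [abs_of_nonpos (by linarith)]
      ring
  have hεsq : ε ^ 2 = δ ^ 2 := by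
    rw [hε]; split_ifs <;> ring
  have hεz : ε * z ≤ δ * |z| := by
    have h1 : ε * z ≤ |ε * z| := le_abs_self _
    have h2 : |ε| = δ := by
      rw [hε]; split_ifs
      · rw [abs_neg, abs_of_pos hδpos]
      · rw [abs_of_pos hδpos]
    rw [abs_mul, h2] at h1
    exact h1
  have hk := key ε
  rw [hεabs] at hk
  nlinarith [hk, hεz, hεsq, hQ0, hδpos, hcpos,
    mul_le_mul_of_nonneg_left hδc hδpos.le]
end

section
/- (Existence of λ_max) There exists λ_max ≥ 0 such that for all λ ≥ λ_max, the minimizer of the ℓ1 trend filtering objective is the least-squares affine fit to the data, i.e., the unique affine sequence m_t = a + b t minimizing Σ_{t=1}^N (y_t - a - b t)². -/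
open Finset

noncomputable def D2 {N : ℕ} (h : Fin N → ℝ) (j : Fin (N-2)) : ℝ :=
  h ⟨(j:ℕ)+2, by have := j.isLt; omega⟩ - 2 * h ⟨(j:ℕ)+1, by have := j.isLt; omega⟩
    + h ⟨(j:ℕ), by have := j.isLt; omega⟩

lemma wdelta (j k : ℕ) :
    ((j+2 - (k+1) : ℕ) : ℝ) - 2*((j+1 - (k+1) : ℕ):ℝ) + ((j - (k+1):ℕ):ℝ)
      = if k = j then 1 else 0 := by
  rcases lt_trichotomy k j with hlt | heq | hgt
  · obtain ⟨m, rfl⟩ : ∃ m, j = k + 1 + m := ⟨j - k - 1, by omega⟩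
    have h1 : k + 1 + m + 2 - (k+1) = m + 2 := by omega
    have h2 : k + 1 + m + 1 - (k+1) = m + 1 := by omega
    have h3 : k + 1 + m - (k+1) = m := by omega
    rw [h1, h2, h3, if_neg (by omega)]
    push_cast; ring
  · subst heq
    have h1 : k + 2 - (k+1) = 1 := by omega
    have h2 : k + 1 - (k+1) = 0 := by omega
    have h3 : k - (k+1) = 0 := by omega
    rw [h1, h2, h3, if_pos rfl]; norm_num
  · have h1 : j + 2 - (k+1) = 0 := by omega
    have h2 : j + 1 - (k+1) = 0 := by omega
    have h3 : j - (k+1) = 0 := by omega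
    rw [h1, h2, h3, if_neg (by omega)]; norm_num

lemma D2_section {N : ℕ} (d : Fin (N-2) → ℝ) (j : Fin (N-2)) :
    D2 (fun t : Fin N => ∑ k : Fin (N-2), (((t:ℕ) - ((k:ℕ)+1) : ℕ):ℝ) * d k) j = d j := by
  unfold D2
  simp only [Fin.val_mk]
  rw [Finset.mul_sum, ← Finset.sum_sub_distrib, ← Finset.sum_add_distrib]
  have hterm : ∀ k : Fin (N-2),
      ((((j:ℕ)+2 - ((k:ℕ)+1) : ℕ):ℝ) * d k - 2*((((j:ℕ)+1 - ((k:ℕ)+1) : ℕ):ℝ) * d k)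
        + (((j:ℕ) - ((k:ℕ)+1) : ℕ):ℝ) * d k)
      = (if k = j then 1 else 0) * d k := by
    intro k
    have hw := wdelta (j:ℕ) (k:ℕ)
    simp only [Fin.val_inj] at hw
    rw [← hw]; ring
  rw [Finset.sum_congr rfl (fun k _ => hterm k)]
  simp [ite_mul]

lemma affine_of_secdiff {N : ℕ} (g : Fin N → ℝ)
    (hg : ∀ j : Fin (N-2), D2 g j = 0) (h0 : 0 < N) (h1 : 1 < N) :
    ∀ t : Fin N, g t = g ⟨0, h0⟩ + (g ⟨1, h1⟩ - g ⟨0, h0⟩) * (t : ℝ) := by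
  suffices H : ∀ n, ∀ (hn : n < N), g ⟨n, hn⟩ = g ⟨0, h0⟩ + (g ⟨1, h1⟩ - g ⟨0, h0⟩) * (n : ℝ) by
    exact fun t => by simpa using H t.val t.isLt
  intro n
  induction n using Nat.strong_induction_on with
  | _ n ih =>
    match n with
    | 0 => intro hn; simp
    | 1 => intro hn; push_cast; ring
    | (m+2) =>
      intro hn
      have e := hg ⟨m, by omega⟩
      unfold D2 at e
      simp only [Fin.val_mk] at e ⊢
      have ih1 := ih (m+1) (by omega) (by omega)
      have ih0 := ih m (by omega) (by omega)
      push_cast at ih1 ih0 ⊢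
      nlinarith [e, ih1, ih0]

lemma tv2_eq {N : ℕ} (hN : 3 ≤ N) (v : Fin N → ℝ) :
    tv2 N v = ∑ j : Fin (N-2), |D2 v j| := by
  unfold tv2
  rw [Finset.sum_Ico_eq_sum_range, ← Fin.sum_univ_eq_sum_range
    (fun i => |vext N v (2+i) - 2 * vext N v (2+i-1) + vext N v (2+i-2)|) (N-2)]
  refine Finset.sum_congr rfl fun j _ => ?_
  have hj := j.isLt
  have e1 : 2 + (j:ℕ) - 1 = (j:ℕ) + 1 := by omega
  have e2 : 2 + (j:ℕ) - 2 = (j:ℕ) := by omega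
  rw [e1, e2, show 2 + (j:ℕ) = (j:ℕ) + 2 from by omega]
  unfold vext D2
  rw [dif_pos (by omega : (j:ℕ) + 2 < N), dif_pos (by omega : (j:ℕ) + 1 < N),
    dif_pos (by omega : (j:ℕ) < N)]

set_option maxHeartbeats 1600000 in
theorem trend_filter_lambda_max_exists
    (N : ℕ) (hN : 3 ≤ N) (y : Fin N → ℝ) :
    ∃ lamMax : ℝ, 0 ≤ lamMax ∧ ∃ a b : ℝ,
      (∀ a' b' : ℝ,
        (∑ t : Fin N, (y t - (a + b * ((t : ℝ) + 1))) ^ 2) ≤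
        (∑ t : Fin N, (y t - (a' + b' * ((t : ℝ) + 1))) ^ 2)) ∧
      (∀ lam : ℝ, lamMax ≤ lam →
        (∀ m' : Fin N → ℝ,
          Fobj N lam y (fun t : Fin N => a + b * ((t : ℝ) + 1)) ≤ Fobj N lam y m') ∧
        (∀ m : Fin N → ℝ, (∀ m' : Fin N → ℝ, Fobj N lam y m ≤ Fobj N lam y m') →
          m = fun t : Fin N => a + b * ((t : ℝ) + 1))) := by
  have hN0 : (0:ℝ) < (N:ℝ) := by exact_mod_cast (by omega : 0 < N)
  have hNne : (N:ℝ) ≠ 0 := ne_of_gt hN0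
  set x : Fin N → ℝ := fun t => (t:ℝ) + 1 with hxd
  set S1 : ℝ := ∑ t, x t with hS1
  set S2 : ℝ := ∑ t, x t ^ 2 with hS2
  set Sy : ℝ := ∑ t, y t with hSy
  set Sxy : ℝ := ∑ t, y t * x t with hSxy
  -- determinant positivity
  set μ : ℝ := S1 / N with hμ
  have hsum1 : ∑ t : Fin N, (x t - μ)^2 = S2 - 2*μ*S1 + N*μ^2 := by
    have e : ∀ t : Fin N, (x t - μ)^2 = x t ^ 2 - 2*μ*(x t) + μ^2 := fun t => by ring
    rw [Finset.sum_congr rfl (fun t _ => e t), Finset.sum_add_distrib,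
      Finset.sum_sub_distrib, ← Finset.mul_sum, Finset.sum_const, card_univ,
      Fintype.card_fin, nsmul_eq_mul]
  have hid : (N:ℝ) * ∑ t : Fin N, (x t - μ)^2 = (N:ℝ)*S2 - S1^2 := by
    rw [hsum1, hμ]; field_simp; ring
  have h0N : 0 < N := by omega
  have h1N : 1 < N := by omega
  have hne01 : (⟨0, h0N⟩ : Fin N) ≠ ⟨1, h1N⟩ := by simp [Fin.ext_iff]
  have hlow : (x ⟨0, h0N⟩ - μ)^2 + (x ⟨1, h1N⟩ - μ)^2 ≤ ∑ t : Fin N, (x t - μ)^2 := by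
    have := Finset.sum_le_sum_of_subset_of_nonneg
      (Finset.subset_univ ({⟨0, h0N⟩, ⟨1, h1N⟩} : Finset (Fin N)))
      (fun i _ _ => sq_nonneg (x i - μ))
    rwa [Finset.sum_pair hne01] at this
  have hx0 : x ⟨0, h0N⟩ = 1 := by simp [hxd]
  have hx1 : x ⟨1, h1N⟩ = 2 := by simp [hxd]; norm_num
  have hpos2 : 0 < (x ⟨0, h0N⟩ - μ)^2 + (x ⟨1, h1N⟩ - μ)^2 := by
    rw [hx0, hx1]
    nlinarith [sq_nonneg ((1-μ) + (2-μ))]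
  have hdet : 0 < (N:ℝ)*S2 - S1^2 := by
    have h1 : (N:ℝ) * ((x ⟨0, h0N⟩ - μ)^2 + (x ⟨1, h1N⟩ - μ)^2) ≤ (N:ℝ) * ∑ t : Fin N, (x t - μ)^2 :=
      mul_le_mul_of_nonneg_left hlow (le_of_lt hN0)
    nlinarith [mul_pos hN0 hpos2]
  have hdetne : (N:ℝ)*S2 - S1^2 ≠ 0 := ne_of_gt hdet
  set b : ℝ := ((N:ℝ)*Sxy - S1*Sy)/((N:ℝ)*S2 - S1^2) with hb
  set a : ℝ := (Sy - b*S1)/N with ha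
  set r : Fin N → ℝ := fun t => y t - a - b * x t with hrdef
  have e1 : ∑ t, r t = Sy - (N:ℝ)*a - b*S1 := by
    simp only [hrdef]
    rw [Finset.sum_sub_distrib, Finset.sum_sub_distrib, ← Finset.mul_sum,
      Finset.sum_const, card_univ, Fintype.card_fin, nsmul_eq_mul]
  have hr1 : ∑ t, r t = 0 := by
    rw [e1, ha]; field_simp; ring
  have e2 : ∑ t, r t * x t = Sxy - a*S1 - b*S2 := by
    have e : ∀ t : Fin N, r t * x t = y t * x t - a * x t - b * (x t^2) := fun t => by
      simp only [hrdef]; ring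
    rw [Finset.sum_congr rfl (fun t _ => e t), Finset.sum_sub_distrib,
      Finset.sum_sub_distrib, ← Finset.mul_sum, ← Finset.mul_sum]
  have hr2 : ∑ t, r t * x t = 0 := by
    rw [e2, ha, hb]; field_simp; ring
  have hrt : ∑ t, r t * (t:ℝ) = 0 := by
    have e : ∀ t : Fin N, r t * (t:ℝ) = r t * x t - r t := fun t => by
      simp only [hxd]; ring
    rw [Finset.sum_congr rfl (fun t _ => e t), Finset.sum_sub_distrib, hr1, hr2, sub_zero]
  -- least squares minimality
  have hLS : ∀ a' b' : ℝ,
      (∑ t : Fin N, (y t - (a + b * ((t : ℝ) + 1))) ^ 2) ≤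
      (∑ t : Fin N, (y t - (a' + b' * ((t : ℝ) + 1))) ^ 2) := by
    intro a' b'
    have hterm : ∀ t : Fin N, (y t - (a' + b' * ((t:ℝ)+1)))^2 =
        (r t)^2 + ((a - a') + (b - b')*x t)^2 + 2*(a - a')*(r t) + 2*(b - b')*(r t * x t) :=
      fun t => by simp only [hrdef, hxd]; ring
    have hL : ∑ t : Fin N, (y t - (a + b * ((t:ℝ)+1)))^2 = ∑ t, (r t)^2 :=
      Finset.sum_congr rfl fun t _ => by simp only [hrdef, hxd]; ring
    have hexp : ∑ t : Fin N, (y t - (a' + b' * ((t:ℝ)+1)))^2 =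
        ∑ t, (r t)^2 + ∑ t, ((a - a') + (b - b')*x t)^2
          + 2*(a - a')*(∑ t, r t) + 2*(b - b')*(∑ t, r t * x t) := by
      rw [Finset.sum_congr rfl (fun t _ => hterm t), Finset.sum_add_distrib,
        Finset.sum_add_distrib, Finset.sum_add_distrib, ← Finset.mul_sum, ← Finset.mul_sum]
    rw [hL, hexp, hr1, hr2]
    have : (0:ℝ) ≤ ∑ t, ((a - a') + (b - b')*x t)^2 :=
      Finset.sum_nonneg fun t _ => sq_nonneg _
    linarith
  -- the dual coefficients
  set c : Fin (N-2) → ℝ := fun k => ∑ t : Fin N, (((t:ℕ) - ((k:ℕ)+1) : ℕ):ℝ) * r t with hcdef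
  refine ⟨∑ k, |c k|, Finset.sum_nonneg fun k _ => abs_nonneg _, a, b, hLS, ?_⟩
  intro lam hlam
  -- key summation-by-parts identity
  have key : ∀ h : Fin N → ℝ, ∑ t, r t * h t = ∑ k, c k * D2 h k := by
    intro h
    set sd : Fin N → ℝ := fun t => ∑ k : Fin (N-2), (((t:ℕ) - ((k:ℕ)+1) : ℕ):ℝ) * D2 h k with hsd
    have hDs : ∀ j : Fin (N-2), D2 sd j = D2 h j := by
      intro j
      rw [hsd]
      exact D2_section (fun k => D2 h k) j
    set g : Fin N → ℝ := fun t => h t - sd t with hgdef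
    have hDg : ∀ j : Fin (N-2), D2 g j = 0 := by
      intro j
      have h1 := hDs j
      unfold D2 at h1 ⊢
      simp only [hgdef]
      linarith
    have haff := affine_of_secdiff g hDg h0N h1N
    have hsplit : ∀ t : Fin N, r t * h t =
        r t * sd t + (g ⟨0, h0N⟩) * r t + (g ⟨1, h1N⟩ - g ⟨0, h0N⟩) * (r t * (t:ℝ)) := by
      intro t
      have h2 := haff t
      simp only [hgdef] at h2
      linear_combination r t * h2
    rw [Finset.sum_congr rfl (fun t _ => hsplit t), Finset.sum_add_distrib,
      Finset.sum_add_distrib, ← Finset.mul_sum, ← Finset.mul_sum, hr1, hrt,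
      mul_zero, mul_zero, add_zero, add_zero]
    calc ∑ t, r t * sd t
        = ∑ t : Fin N, ∑ k : Fin (N-2), ((((t:ℕ) - ((k:ℕ)+1) : ℕ):ℝ) * r t) * D2 h k := by
          refine Finset.sum_congr rfl fun t _ => ?_
          rw [hsd, Finset.mul_sum]
          exact Finset.sum_congr rfl fun k _ => by ring
      _ = ∑ k : Fin (N-2), ∑ t : Fin N, ((((t:ℕ) - ((k:ℕ)+1) : ℕ):ℝ) * r t) * D2 h k :=
          Finset.sum_comm
      _ = ∑ k, c k * D2 h k := by
          refine Finset.sum_congr rfl fun k _ => ?_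
          rw [hcdef, Finset.sum_mul]
  -- second differences of the affine fit vanish
  have hDm : ∀ j : Fin (N-2), D2 (fun t : Fin N => a + b * ((t : ℝ) + 1)) j = 0 := by
    intro j
    unfold D2
    simp only [Fin.val_mk]
    push_cast
    ring
  -- main inequality
  have hFle : ∀ m' : Fin N → ℝ,
      Fobj N lam y (fun t : Fin N => a + b * ((t : ℝ) + 1))
        + (1/2) * ∑ t, (m' t - (a + b * ((t:ℝ)+1)))^2 ≤ Fobj N lam y m' := by
    intro m'
    set hd : Fin N → ℝ := fun t => m' t - (a + b * ((t:ℝ)+1)) with hhd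
    have hfit : fitErr N y m' = fitErr N y (fun t : Fin N => a + b * ((t : ℝ) + 1))
        - 2*(∑ t, r t * hd t) + ∑ t, (hd t)^2 := by
      unfold fitErr
      have e : ∀ t : Fin N, (y t - m' t)^2 =
          (y t - (a + b * ((t:ℝ)+1)))^2 - 2*(r t * hd t) + (hd t)^2 := by
        intro t
        simp only [hhd, hrdef, hxd]
        ring
      rw [Finset.sum_congr rfl (fun t _ => e t), Finset.sum_add_distrib,
        Finset.sum_sub_distrib, ← Finset.mul_sum]
    have htv : tv2 N m' = ∑ j, |D2 hd j| := by
      rw [tv2_eq hN]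
      refine Finset.sum_congr rfl fun j _ => ?_
      have e : D2 m' j = D2 hd j := by
        have h1 := hDm j
        unfold D2 at h1 ⊢
        simp only [hhd, Fin.val_mk] at h1 ⊢
        linarith
      rw [e]
    have htvh : tv2 N (fun t : Fin N => a + b * ((t : ℝ) + 1)) = 0 := by
      rw [tv2_eq hN]
      exact Finset.sum_eq_zero fun j _ => by rw [hDm j, abs_zero]
    have hbound : ∑ t, r t * hd t ≤ lam * ∑ j, |D2 hd j| := by
      rw [key hd, Finset.mul_sum]
      refine Finset.sum_le_sum fun j _ => ?_
      have h1 : |c j| ≤ ∑ k, |c k| := Finset.single_le_sum (f := fun k => |c k|) (fun k _ => abs_nonneg (c k)) (mem_univ j)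
      have h2 : c j * D2 hd j ≤ |c j| * |D2 hd j| := by
        calc c j * D2 hd j ≤ |c j * D2 hd j| := le_abs_self _
          _ = |c j| * |D2 hd j| := abs_mul _ _
      have h3 : |c j| * |D2 hd j| ≤ lam * |D2 hd j| :=
        mul_le_mul_of_nonneg_right (le_trans h1 hlam) (abs_nonneg _)
      linarith
    unfold Fobj
    rw [hfit, htv, htvh, mul_zero]
    linarith
  constructor
  · intro m'
    have h1 := hFle m'
    have h2 : (0:ℝ) ≤ ∑ t, (m' t - (a + b * ((t:ℝ)+1)))^2 :=
      Finset.sum_nonneg fun t _ => sq_nonneg _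
    linarith
  · intro m hm
    have h1 := hFle m
    have h2 := hm (fun t : Fin N => a + b * ((t : ℝ) + 1))
    have hsq : ∀ u ∈ (univ : Finset (Fin N)), (0:ℝ) ≤ (m u - (a + b * ((u:ℝ)+1)))^2 :=
      fun u _ => sq_nonneg _
    have h3 : ∑ t, (m t - (a + b * ((t:ℝ)+1)))^2 ≤ 0 := by linarith
    have h4 : ∑ t, (m t - (a + b * ((t:ℝ)+1)))^2 = 0 :=
      le_antisymm h3 (Finset.sum_nonneg hsq)
    funext t
    have h5 := (Finset.sum_eq_zero_iff_of_nonneg hsq).mp h4 t (mem_univ t)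
    have h6 : m t - (a + b * ((t:ℝ)+1)) = 0 := by
      exact pow_eq_zero_iff (n := 2) (by norm_num) |>.mp h5
    linarith
end

section
/- (Affine fit dual characterization) Let m̂ be the least-squares affine fit to y, and let ẑ_t = Σ_{i=1}^{t-1}(t-i)(m̂_i - y_i). Then ẑ satisfies the boundary conditions ẑ_N = ẑ_{N+1} = 0, and m̂ minimizes the ℓ1 trend filtering objective with parameter λ if and only if |ẑ_t| ≤ λ for all t = 2, ..., N-1. -/
open Finset

lemma vext_coe {N : ℕ} (m : Fin N → ℝ) (t : Fin N) : vext N m (t : ℕ) = m t := by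
  simp [vext]

lemma zdual_eq (N : ℕ) (y m : Fin N → ℝ) (t : ℕ) :
    zdual N y m t = ∑ j ∈ Finset.range (t - 1),
      ((t : ℝ) - (j : ℝ) - 1) * (vext N m j - vext N y j) := by
  unfold zdual
  rw [Finset.sum_Ico_eq_sum_range]
  apply Finset.sum_congr rfl
  intro j hj
  have h : (1 + j) - 1 = j := by omega
  rw [h]
  push_cast
  ring

lemma zdual_succ_sub (N : ℕ) (y m : Fin N → ℝ) (t : ℕ) :
    zdual N y m (t + 1) - zdual N y m t =
      ∑ j ∈ Finset.range t, (vext N m j - vext N y j) := by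
  rcases Nat.eq_zero_or_pos t with rfl | ht
  · simp [zdual]
  obtain ⟨u, rfl⟩ : ∃ u, t = u + 1 := ⟨t - 1, by omega⟩
  rw [zdual_eq, zdual_eq]
  have h1 : (u + 1 + 1 - 1) = u + 1 := by omega
  have h2 : (u + 1 - 1) = u := by omega
  rw [h1, h2]
  rw [Finset.sum_range_succ]
  rw [Finset.sum_range_succ]
  have hc : (∑ j ∈ Finset.range u, (((u + 1 + 1 : ℕ) : ℝ) - (j : ℝ) - 1) * (vext N m j - vext N y j))
      - (∑ j ∈ Finset.range u, (((u + 1 : ℕ) : ℝ) - (j : ℝ) - 1) * (vext N m j - vext N y j))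
      = ∑ j ∈ Finset.range u, (vext N m j - vext N y j) := by
    rw [← Finset.sum_sub_distrib]
    apply Finset.sum_congr rfl
    intro j hj
    push_cast
    ring
  have he : (((u + 1 + 1 : ℕ) : ℝ) - (u : ℝ) - 1) * (vext N m u - vext N y u)
      = vext N m u - vext N y u := by push_cast; ring
  linarith

lemma zdual_second_diff (N : ℕ) (y m : Fin N → ℝ) (j : ℕ) :
    zdual N y m (j + 2) - 2 * zdual N y m (j + 1) + zdual N y m j
      = vext N m j - vext N y j := by
  have h1 := zdual_succ_sub N y m (j + 1)
  have h2 := zdual_succ_sub N y m j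
  have h3 : ∑ i ∈ Finset.range (j + 1), (vext N m i - vext N y i)
      = (∑ i ∈ Finset.range j, (vext N m i - vext N y i)) + (vext N m j - vext N y j) :=
    Finset.sum_range_succ _ _
  linarith [h1, h2]

lemma zdual_zero (N : ℕ) (y m : Fin N → ℝ) : zdual N y m 0 = 0 := by simp [zdual]
lemma zdual_one (N : ℕ) (y m : Fin N → ℝ) : zdual N y m 1 = 0 := by simp [zdual]

lemma key_identity (N : ℕ) (hN : 3 ≤ N) (y m : Fin N → ℝ)
    (hZN : zdual N y m N = 0) (hZN1 : zdual N y m (N + 1) = 0)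
    (d : ℕ → ℝ) :
    ∑ j ∈ Finset.range N, (vext N m j - vext N y j) * d j
      = ∑ t ∈ Finset.Ico 2 N, zdual N y m t * (d t - 2 * d (t - 1) + d (t - 2)) := by
  obtain ⟨K, rfl⟩ : ∃ K, N = K + 3 := ⟨N - 3, by omega⟩
  set Z := zdual (K + 3) y m with hZ
  have step : ∑ j ∈ Finset.range (K + 3), (vext (K+3) m j - vext (K+3) y j) * d j
      = (∑ j ∈ Finset.range (K + 3), Z (j + 2) * d j)
        - 2 * (∑ j ∈ Finset.range (K + 3), Z (j + 1) * d j)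
        + (∑ j ∈ Finset.range (K + 3), Z j * d j) := by
    rw [Finset.mul_sum, ← Finset.sum_sub_distrib, ← Finset.sum_add_distrib]
    apply Finset.sum_congr rfl
    intro j hj
    have h := zdual_second_diff (K + 3) y m j
    linear_combination (d j) * h.symm
  have hR : ∑ t ∈ Finset.Ico 2 (K + 3), Z t * (d t - 2 * d (t - 1) + d (t - 2))
      = ∑ u ∈ Finset.range (K + 1), Z (u + 2) * (d (u + 2) - 2 * d (u + 1) + d u) := by
    rw [Finset.sum_Ico_eq_sum_range]
    apply Finset.sum_congr (by congr 1)
    intro u hu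
    have e1 : 2 + u = u + 2 := by omega
    have e2 : (2 + u) - 1 = u + 1 := by omega
    have e3 : (2 + u) - 2 = u := by omega
    rw [e2, e3, e1]
  have hsplit : ∑ u ∈ Finset.range (K + 1), Z (u + 2) * (d (u + 2) - 2 * d (u + 1) + d u)
      = (∑ u ∈ Finset.range (K + 1), Z (u + 2) * d (u + 2))
        - 2 * (∑ u ∈ Finset.range (K + 1), Z (u + 2) * d (u + 1))
        + (∑ u ∈ Finset.range (K + 1), Z (u + 2) * d u) := by
    rw [Finset.mul_sum, ← Finset.sum_sub_distrib, ← Finset.sum_add_distrib]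
    apply Finset.sum_congr rfl
    intro u hu
    ring
  have hA : (∑ j ∈ Finset.range (K + 3), Z (j + 2) * d j)
      = ∑ u ∈ Finset.range (K + 1), Z (u + 2) * d u := by
    rw [Finset.sum_range_succ, Finset.sum_range_succ]
    have z1 : Z (K + 1 + 2) = 0 := hZN
    have z2 : Z (K + 2 + 2) = 0 := hZN1
    rw [z1, z2]
    ring
  have hB : (∑ j ∈ Finset.range (K + 3), Z (j + 1) * d j)
      = ∑ u ∈ Finset.range (K + 1), Z (u + 2) * d (u + 1) := by
    rw [Finset.sum_range_succ]
    have z1 : Z (K + 2 + 1) = 0 := hZN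
    rw [z1]
    rw [Finset.sum_range_succ']
    have z2 : Z (0 + 1) = 0 := zdual_one _ _ _
    rw [z2]
    simp
  have hC : (∑ j ∈ Finset.range (K + 3), Z j * d j)
      = ∑ u ∈ Finset.range (K + 1), Z (u + 2) * d (u + 2) := by
    rw [Finset.sum_range_succ']
    have z0 : Z 0 = 0 := zdual_zero _ _ _
    rw [z0]
    rw [Finset.sum_range_succ']
    have z1 : Z (0 + 1) = 0 := zdual_one _ _ _
    rw [z1]
    simp [add_assoc]
  rw [step, hR, hsplit, hA, hB, hC]
  ring

lemma zdual_boundary (N : ℕ) (hN : 1 ≤ N) (y m : Fin N → ℝ)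
    (hS0 : ∑ j ∈ Finset.range N, (vext N m j - vext N y j) = 0)
    (hS1 : ∑ j ∈ Finset.range N, ((j : ℝ) + 1) * (vext N m j - vext N y j) = 0) :
    zdual N y m N = 0 ∧ zdual N y m (N + 1) = 0 := by
  constructor
  · rw [zdual_eq]
    obtain ⟨M, rfl⟩ : ∃ M, N = M + 1 := ⟨N - 1, by omega⟩
    have h1 : (M + 1) - 1 = M := by omega
    rw [h1]
    have hext : ∑ j ∈ Finset.range (M + 1),
        (((M + 1 : ℕ) : ℝ) - (j : ℝ) - 1) * (vext (M+1) m j - vext (M+1) y j)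
        = (∑ j ∈ Finset.range M,
            (((M + 1 : ℕ) : ℝ) - (j : ℝ) - 1) * (vext (M+1) m j - vext (M+1) y j)) := by
      rw [Finset.sum_range_succ]
      have : (((M + 1 : ℕ) : ℝ) - (M : ℝ) - 1) = 0 := by push_cast; ring
      rw [this]
      simp
    have hlin : ∑ j ∈ Finset.range (M + 1),
        (((M + 1 : ℕ) : ℝ) - (j : ℝ) - 1) * (vext (M+1) m j - vext (M+1) y j)
        = ((M + 1 : ℕ) : ℝ) * (∑ j ∈ Finset.range (M + 1), (vext (M+1) m j - vext (M+1) y j))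
          - ∑ j ∈ Finset.range (M + 1), ((j : ℝ) + 1) * (vext (M+1) m j - vext (M+1) y j) := by
      rw [Finset.mul_sum, ← Finset.sum_sub_distrib]
      apply Finset.sum_congr rfl
      intro j hj
      push_cast
      ring
    rw [← hext, hlin, hS0, hS1]
    ring
  · rw [zdual_eq]
    have h1 : (N + 1) - 1 = N := by omega
    rw [h1]
    have hlin : ∑ j ∈ Finset.range N,
        (((N + 1 : ℕ) : ℝ) - (j : ℝ) - 1) * (vext N m j - vext N y j)
        = ((N + 1 : ℕ) : ℝ) * (∑ j ∈ Finset.range N, (vext N m j - vext N y j))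
          - ∑ j ∈ Finset.range N, ((j : ℝ) + 1) * (vext N m j - vext N y j) := by
      rw [Finset.mul_sum, ← Finset.sum_sub_distrib]
      apply Finset.sum_congr rfl
      intro j hj
      push_cast
      ring
    rw [hlin, hS0, hS1]
    ring

theorem affine_fit_dual_characterization
    (N : ℕ) (hN : 3 ≤ N) (y : Fin N → ℝ) (lam : ℝ) (hlam : 0 ≤ lam)
    (a b : ℝ) (mhat : Fin N → ℝ)
    (hmhat : mhat = fun t : Fin N => a + b * ((t : ℝ) + 1))
    (hls : ∀ a' b' : ℝ,
      (∑ t : Fin N, (y t - (a + b * ((t : ℝ) + 1))) ^ 2) ≤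
      (∑ t : Fin N, (y t - (a' + b' * ((t : ℝ) + 1))) ^ 2)) :
    zdual N y mhat N = 0 ∧ zdual N y mhat (N + 1) = 0 ∧
    ((∀ m' : Fin N → ℝ, Fobj N lam y mhat ≤ Fobj N lam y m') ↔
      ∀ t : ℕ, 2 ≤ t → t ≤ N - 1 → |zdual N y mhat t| ≤ lam) := by
  -- the fitted values via vext
  have hmv : ∀ j : ℕ, j < N → vext N mhat j = a + b * ((j : ℝ) + 1) := by
    intro j hj
    simp [vext, hj, hmhat]
  -- ######## normal equations ########
  have hnormal : (∑ t : Fin N, (y t - mhat t) = 0) ∧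
      (∑ t : Fin N, ((t : ℝ) + 1) * (y t - mhat t) = 0) := by
    have hr : ∀ t : Fin N, y t - mhat t = y t - (a + b * ((t : ℝ) + 1)) := by
      intro t; rw [hmhat]
    simp only [hr]
    set r : Fin N → ℝ := fun t => y t - (a + b * ((t : ℝ) + 1)) with hrdef
    set S : ℝ := ∑ t : Fin N, r t with hS
    set T : ℝ := ∑ t : Fin N, ((t : ℝ) + 1) * r t with hT
    have hexp : ∀ c e : ℝ, ∑ t : Fin N, (y t - ((a + c) + (b + e) * ((t : ℝ) + 1))) ^ 2
        = (∑ t : Fin N, (r t) ^ 2)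
          - 2 * (∑ t : Fin N, (c + e * ((t : ℝ) + 1)) * r t)
          + ∑ t : Fin N, (c + e * ((t : ℝ) + 1)) ^ 2 := by
      intro c e
      rw [Finset.mul_sum, ← Finset.sum_sub_distrib, ← Finset.sum_add_distrib]
      apply Finset.sum_congr rfl
      intro t _
      simp only [hrdef]
      ring
    have hNpos : (0 : ℝ) < N := by
      have : 0 < N := by omega
      exact_mod_cast this
    have hS0 : S = 0 := by
      have h1 := hls (a + S / N) (b + 0)
      rw [hexp (S / N) 0] at h1
      have h2 : ∑ t : Fin N, (S / N + 0 * ((t : ℝ) + 1)) * r t = (S / N) * S := by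
        simp only [zero_mul, add_zero]
        rw [← Finset.mul_sum]
      have h3 : ∑ t : Fin N, (S / N + 0 * ((t : ℝ) + 1)) ^ 2 = (N : ℝ) * (S / N) ^ 2 := by
        simp only [zero_mul, add_zero]
        rw [Finset.sum_const, Finset.card_univ, Fintype.card_fin, nsmul_eq_mul]
      rw [h2, h3] at h1
      have hNne : (N : ℝ) ≠ 0 := ne_of_gt hNpos
      have e1 : -(2 : ℝ) * ((S / N) * S) + (N : ℝ) * (S / N) ^ 2 = -(S ^ 2) / N := by
        field_simp
        ring
      have h4 : S ^ 2 ≤ 0 := by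
        by_contra h
        push_neg at h
        have : -(S ^ 2) / N < 0 := div_neg_of_neg_of_pos (by linarith) hNpos
        linarith
      have h5 : S ^ 2 = 0 := le_antisymm h4 (sq_nonneg S)
      exact pow_eq_zero_iff two_ne_zero |>.mp h5
    set Q : ℝ := ∑ t : Fin N, ((t : ℝ) + 1) ^ 2 with hQ
    have hQpos : 0 < Q := by
      have : Nonempty (Fin N) := ⟨⟨0, by omega⟩⟩
      apply Finset.sum_pos
      · intro t _
        positivity
      · exact Finset.univ_nonempty
    have hT0 : T = 0 := by
      have h1 := hls (a + 0) (b + T / Q)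
      rw [hexp 0 (T / Q)] at h1
      have h2 : ∑ t : Fin N, (0 + T / Q * ((t : ℝ) + 1)) * r t = (T / Q) * T := by
        simp only [zero_add]
        rw [hT, Finset.mul_sum]
        apply Finset.sum_congr rfl
        intro t _
        ring
      have h3 : ∑ t : Fin N, (0 + T / Q * ((t : ℝ) + 1)) ^ 2 = (T / Q) ^ 2 * Q := by
        simp only [zero_add]
        rw [hQ, Finset.mul_sum]
        apply Finset.sum_congr rfl
        intro t _
        ring
      rw [h2, h3] at h1
      have hQne : Q ≠ 0 := ne_of_gt hQpos
      have e1 : -(2 : ℝ) * ((T / Q) * T) + (T / Q) ^ 2 * Q = -(T ^ 2) / Q := by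
        field_simp
        ring
      have h4 : T ^ 2 ≤ 0 := by
        by_contra h
        push_neg at h
        have : -(T ^ 2) / Q < 0 := div_neg_of_neg_of_pos (by linarith) hQpos
        linarith
      have h5 : T ^ 2 = 0 := le_antisymm h4 (sq_nonneg T)
      exact pow_eq_zero_iff two_ne_zero |>.mp h5
    exact ⟨hS0, hT0⟩
  -- range versions of the normal equations
  have hS0 : ∑ j ∈ Finset.range N, (vext N mhat j - vext N y j) = 0 := by
    have h := Fin.sum_univ_eq_sum_range (fun j => vext N mhat j - vext N y j) N
    rw [← h]
    have : ∀ t : Fin N, vext N mhat (t : ℕ) - vext N y (t : ℕ) = -(y t - mhat t) := by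
      intro t
      rw [vext_coe, vext_coe]
      ring
    rw [Finset.sum_congr rfl (fun t _ => this t), Finset.sum_neg_distrib]
    rw [hnormal.1]
    ring
  have hS1 : ∑ j ∈ Finset.range N, ((j : ℝ) + 1) * (vext N mhat j - vext N y j) = 0 := by
    have h := Fin.sum_univ_eq_sum_range
      (fun j => ((j : ℝ) + 1) * (vext N mhat j - vext N y j)) N
    rw [← h]
    have : ∀ t : Fin N, ((t : ℝ) + 1) * (vext N mhat (t : ℕ) - vext N y (t : ℕ))
        = -(((t : ℝ) + 1) * (y t - mhat t)) := by
      intro t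
      rw [vext_coe, vext_coe]
      ring
    rw [Finset.sum_congr rfl (fun t _ => this t), Finset.sum_neg_distrib]
    rw [hnormal.2]
    ring
  obtain ⟨hZN, hZN1⟩ := zdual_boundary N (by omega) y mhat hS0 hS1
  refine ⟨hZN, hZN1, ?_⟩
  -- ######## the objective difference formula ########
  have htv2mhat : tv2 N mhat = 0 := by
    unfold tv2
    apply Finset.sum_eq_zero
    intro t ht
    rw [Finset.mem_Ico] at ht
    obtain ⟨ht2, htN⟩ := ht
    rw [hmv t htN, hmv (t - 1) (by omega), hmv (t - 2) (by omega)]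
    have c1 : ((t - 1 : ℕ) : ℝ) = (t : ℝ) - 1 := by
      have := Nat.cast_sub (by omega : 1 ≤ t) (R := ℝ)
      simpa using this
    have c2 : ((t - 2 : ℕ) : ℝ) = (t : ℝ) - 2 := by
      have := Nat.cast_sub (by omega : 2 ≤ t) (R := ℝ)
      simpa using this
    rw [c1, c2]
    have : a + b * ((t : ℝ) + 1) - 2 * (a + b * ((t : ℝ) - 1 + 1)) + (a + b * ((t : ℝ) - 2 + 1))
        = 0 := by ring
    rw [this]
    simp
  have hFdiff : ∀ m' : Fin N → ℝ,
      Fobj N lam y m' - Fobj N lam y mhat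
        = (∑ t ∈ Finset.Ico 2 N, (zdual N y mhat t *
              ((vext N m' t - vext N mhat t) - 2 * (vext N m' (t-1) - vext N mhat (t-1))
                + (vext N m' (t-2) - vext N mhat (t-2)))
            + lam * |(vext N m' t - vext N mhat t) - 2 * (vext N m' (t-1) - vext N mhat (t-1))
                + (vext N m' (t-2) - vext N mhat (t-2))|))
          + (1/2) * ∑ j ∈ Finset.range N, (vext N m' j - vext N mhat j) ^ 2 := by
    intro m'
    set dv : ℕ → ℝ := fun j => vext N m' j - vext N mhat j with hdv
    -- tv2 of m'
    have htv2m' : tv2 N m' = ∑ t ∈ Finset.Ico 2 N, |dv t - 2 * dv (t-1) + dv (t-2)| := by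
      unfold tv2
      apply Finset.sum_congr rfl
      intro t ht
      rw [Finset.mem_Ico] at ht
      obtain ⟨ht2, htN⟩ := ht
      congr 1
      have e0 : vext N mhat t - 2 * vext N mhat (t-1) + vext N mhat (t-2) = 0 := by
        rw [hmv t htN, hmv (t - 1) (by omega), hmv (t - 2) (by omega)]
        have c1 : ((t - 1 : ℕ) : ℝ) = (t : ℝ) - 1 := by
          have := Nat.cast_sub (by omega : 1 ≤ t) (R := ℝ)
          simpa using this
        have c2 : ((t - 2 : ℕ) : ℝ) = (t : ℝ) - 2 := by
          have := Nat.cast_sub (by omega : 2 ≤ t) (R := ℝ)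
          simpa using this
        rw [c1, c2]
        ring
      simp only [hdv]
      linarith [e0]
    -- fitErr difference
    have hfit : fitErr N y m' - fitErr N y mhat
        = 2 * (∑ j ∈ Finset.range N, (vext N mhat j - vext N y j) * dv j)
          + ∑ j ∈ Finset.range N, (dv j) ^ 2 := by
      have h1 : fitErr N y m' = ∑ j ∈ Finset.range N, (vext N y j - vext N m' j) ^ 2 := by
        unfold fitErr
        rw [← Fin.sum_univ_eq_sum_range (fun j => (vext N y j - vext N m' j) ^ 2) N]
        apply Finset.sum_congr rfl
        intro t _
        rw [vext_coe, vext_coe]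
      have h2 : fitErr N y mhat = ∑ j ∈ Finset.range N, (vext N y j - vext N mhat j) ^ 2 := by
        unfold fitErr
        rw [← Fin.sum_univ_eq_sum_range (fun j => (vext N y j - vext N mhat j) ^ 2) N]
        apply Finset.sum_congr rfl
        intro t _
        rw [vext_coe, vext_coe]
      rw [h1, h2, Finset.mul_sum, ← Finset.sum_sub_distrib, ← Finset.sum_add_distrib]
      apply Finset.sum_congr rfl
      intro j hj
      simp only [hdv]
      ring
    have hkey := key_identity N hN y mhat hZN hZN1 dv
    have hcomb : ∑ t ∈ Finset.Ico 2 N, (zdual N y mhat t * (dv t - 2 * dv (t-1) + dv (t-2))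
          + lam * |dv t - 2 * dv (t-1) + dv (t-2)|)
        = (∑ t ∈ Finset.Ico 2 N, zdual N y mhat t * (dv t - 2 * dv (t-1) + dv (t-2)))
          + lam * ∑ t ∈ Finset.Ico 2 N, |dv t - 2 * dv (t-1) + dv (t-2)| := by
      rw [Finset.mul_sum, ← Finset.sum_add_distrib]
    have : Fobj N lam y m' - Fobj N lam y mhat
        = (1/2) * (fitErr N y m' - fitErr N y mhat) + lam * tv2 N m' := by
      unfold Fobj
      rw [htv2mhat]
      ring
    rw [this, hfit, hkey, htv2m']
    simp only [hdv]
    linarith [hcomb]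
  -- ######## the equivalence ########
  constructor
  · -- minimality → dual feasibility
    intro hmin t₀ ht2 htle
    by_contra hgt
    push_neg at hgt
    have ht0N : t₀ < N := by omega
    set A : ℝ := |zdual N y mhat t₀| with hA
    set k : ℕ := t₀ - 1 with hk
    have hk1 : 1 ≤ k := by omega
    have ht0k : t₀ = k + 1 := by omega
    set ramp : ℕ → ℝ := fun j => max ((j : ℝ) - (k : ℝ)) 0 with hramp
    set Qr : ℝ := ∑ j ∈ Finset.range N, (ramp j) ^ 2 with hQr
    have hQr1 : 1 ≤ Qr := by
      have hmem : N - 1 ∈ Finset.range N := by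
        rw [Finset.mem_range]; omega
      have hval : 1 ≤ ramp (N - 1) := by
        simp only [hramp]
        have c1 : ((N - 1 : ℕ) : ℝ) = (N : ℝ) - 1 := by
          have := Nat.cast_sub (by omega : 1 ≤ N) (R := ℝ)
          simpa using this
        rw [c1]
        have hkN : (k : ℝ) ≤ (N : ℝ) - 2 := by
          have : k ≤ N - 2 := by omega
          have h2 : ((N - 2 : ℕ) : ℝ) = (N : ℝ) - 2 := by
            have := Nat.cast_sub (by omega : 2 ≤ N) (R := ℝ)
            simpa using this
          have := (Nat.cast_le (α := ℝ)).mpr this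
          rw [h2] at this
          exact this
        have : (1 : ℝ) ≤ (N : ℝ) - 1 - (k : ℝ) := by linarith
        calc (1 : ℝ) ≤ (N : ℝ) - 1 - (k : ℝ) := this
          _ ≤ max ((N : ℝ) - 1 - (k : ℝ)) 0 := le_max_left _ _
      have hterm : 1 ≤ (ramp (N - 1)) ^ 2 := by nlinarith
      calc (1 : ℝ) ≤ (ramp (N - 1)) ^ 2 := hterm
        _ ≤ Qr := Finset.single_le_sum (fun j _ => sq_nonneg (ramp j)) hmem
    have hQrpos : 0 < Qr := by linarith
    have hrampD : ∀ t : ℕ, 2 ≤ t →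
        ramp t - 2 * ramp (t - 1) + ramp (t - 2) = if t = t₀ then 1 else 0 := by
      intro t ht
      have c1 : ((t - 1 : ℕ) : ℝ) = (t : ℝ) - 1 := by
        have := Nat.cast_sub (by omega : 1 ≤ t) (R := ℝ)
        simpa using this
      have c2 : ((t - 2 : ℕ) : ℝ) = (t : ℝ) - 2 := by
        have := Nat.cast_sub (by omega : 2 ≤ t) (R := ℝ)
        simpa using this
      simp only [hramp, c1, c2]
      rcases le_or_gt t k with h | h
      · have hr : (t : ℝ) ≤ (k : ℝ) := by exact_mod_cast h
        rw [max_eq_right (by linarith), max_eq_right (by linarith), max_eq_right (by linarith)]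
        rw [if_neg (by omega)]
        ring
      · rcases eq_or_lt_of_le (Nat.succ_le_of_lt h) with h2 | h2
        · -- t = k + 1
          have heq : t = k + 1 := h2.symm
          have hr : (t : ℝ) = (k : ℝ) + 1 := by
            rw [heq]; push_cast; ring
          rw [max_eq_left (by linarith), max_eq_right (by linarith), max_eq_right (by linarith)]
          rw [if_pos (by omega)]
          linarith
        · -- t ≥ k + 2
          have hr : (k : ℝ) + 2 ≤ (t : ℝ) := by
            have : k + 2 ≤ t := h2
            exact_mod_cast this
          rw [max_eq_left (by linarith), max_eq_left (by linarith), max_eq_left (by linarith)]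
          rw [if_neg (by omega)]
          ring
    set c : ℝ := if 0 ≤ zdual N y mhat t₀ then (-1 : ℝ) else 1 with hc
    have hc2 : c ^ 2 = 1 := by
      rw [hc]; split <;> norm_num
    have hcabs : |c| = 1 := by
      rw [hc]; split <;> simp
    have hcz : c * zdual N y mhat t₀ = -A := by
      rw [hc, hA]
      split_ifs with h
      · rw [abs_of_nonneg h]; ring
      · push_neg at h
        rw [abs_of_neg h]; ring
    set ε : ℝ := (A - lam) / Qr with hε
    have hεpos : 0 < ε := by
      apply div_pos
      · linarith
      · exact hQrpos
    set m' : Fin N → ℝ := fun i => mhat i + ε * c * ramp (i : ℕ) with hm'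
    have hdvm' : ∀ j : ℕ, j < N → vext N m' j - vext N mhat j = ε * c * ramp j := by
      intro j hj
      simp [vext, hj, hm']
    have hF := hFdiff m'
    -- compute the Ico sum
    have hsum1 : (∑ t ∈ Finset.Ico 2 N, (zdual N y mhat t *
              ((vext N m' t - vext N mhat t) - 2 * (vext N m' (t-1) - vext N mhat (t-1))
                + (vext N m' (t-2) - vext N mhat (t-2)))
            + lam * |(vext N m' t - vext N mhat t) - 2 * (vext N m' (t-1) - vext N mhat (t-1))
                + (vext N m' (t-2) - vext N mhat (t-2))|))
        = zdual N y mhat t₀ * (ε * c) + lam * |ε * c| := by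
      have hD : ∀ t ∈ Finset.Ico 2 N,
          (vext N m' t - vext N mhat t) - 2 * (vext N m' (t-1) - vext N mhat (t-1))
            + (vext N m' (t-2) - vext N mhat (t-2))
          = ε * c * (if t = t₀ then 1 else 0) := by
        intro t ht
        rw [Finset.mem_Ico] at ht
        obtain ⟨ht2, htN⟩ := ht
        rw [hdvm' t htN, hdvm' (t-1) (by omega), hdvm' (t-2) (by omega)]
        rw [← hrampD t ht2]
        ring
      rw [Finset.sum_congr rfl (fun t ht => by rw [hD t ht])]
      rw [Finset.sum_eq_single_of_mem t₀ (by rw [Finset.mem_Ico]; omega)]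
      · rw [if_pos rfl, mul_one]
      · intro t ht hne
        rw [if_neg hne]
        simp
    -- compute the square sum
    have hsum2 : ∑ j ∈ Finset.range N, (vext N m' j - vext N mhat j) ^ 2 = ε ^ 2 * Qr := by
      rw [hQr, Finset.mul_sum]
      apply Finset.sum_congr rfl
      intro j hj
      rw [Finset.mem_range] at hj
      rw [hdvm' j hj]
      rw [mul_pow, mul_pow, hc2]
      ring
    rw [hsum1, hsum2] at hF
    have habs : |ε * c| = ε := by
      rw [abs_mul, hcabs, abs_of_pos hεpos]
      ring
    have hzc : zdual N y mhat t₀ * (ε * c) = -A * ε := by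
      have : zdual N y mhat t₀ * (ε * c) = (c * zdual N y mhat t₀) * ε := by ring
      rw [this, hcz]
    rw [habs, hzc] at hF
    have hmin' := hmin m'
    have hεQ : ε * Qr = A - lam := by
      rw [hε]
      field_simp
    have h1 : ε ^ 2 * Qr = ε * (A - lam) := by
      rw [← hεQ]; ring
    have h2 : 0 < ε * (A - lam) := mul_pos hεpos (by linarith)
    have h3 : -A * ε + lam * ε = -(ε * (A - lam)) := by ring
    linarith [hF, hmin', h1, h2, h3]
  · -- dual feasibility → minimality
    intro hb m'
    have hF := hFdiff m'
    have hpos1 : 0 ≤ ∑ t ∈ Finset.Ico 2 N, (zdual N y mhat t *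
              ((vext N m' t - vext N mhat t) - 2 * (vext N m' (t-1) - vext N mhat (t-1))
                + (vext N m' (t-2) - vext N mhat (t-2)))
            + lam * |(vext N m' t - vext N mhat t) - 2 * (vext N m' (t-1) - vext N mhat (t-1))
                + (vext N m' (t-2) - vext N mhat (t-2))|) := by
      apply Finset.sum_nonneg
      intro t ht
      rw [Finset.mem_Ico] at ht
      obtain ⟨ht2, htN⟩ := ht
      have hz := hb t ht2 (by omega)
      set D : ℝ := (vext N m' t - vext N mhat t) - 2 * (vext N m' (t-1) - vext N mhat (t-1))
                + (vext N m' (t-2) - vext N mhat (t-2)) with hD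
      have h1 : -(|zdual N y mhat t| * |D|) ≤ zdual N y mhat t * D := by
        rw [← abs_mul]
        exact neg_abs_le _
      have h2 : |zdual N y mhat t| * |D| ≤ lam * |D| :=
        mul_le_mul_of_nonneg_right hz (abs_nonneg D)
      linarith
    have hpos2 : 0 ≤ (1/2) * ∑ j ∈ Finset.range N, (vext N m' j - vext N mhat j) ^ 2 := by
      positivity
    linarith
end

section
/- (TV denoising optimality conditions) m minimizes G(m) = (1/2) Σ_{t=1}^N (y_t - m_t)^2 + λ Σ_{t=2}^N |m_t - m_{t-1}| if and only if the partial sums S_t = Σ_{i=1}^t (m_i - y_i) satisfy: S_N = 0, |S_t| ≤ λ for all t = 1, ..., N-1, and S_t = λ sgn(m_{t+1} - m_t) whenever m_{t+1} ≠ m_t (1 ≤ t ≤ N-1). -/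
open Finset

noncomputable def Gobj (N : ℕ) (lam : ℝ) (y m : Fin N → ℝ) : ℝ :=
  (1 / 2) * fitErr N y m + lam * ∑ t ∈ Finset.Ico 1 N, |vext N m t - vext N m (t - 1)|

noncomputable def Spartial (N : ℕ) (y m : Fin N → ℝ) (t : ℕ) : ℝ :=
  ∑ i ∈ Finset.Icc 1 t, (vext N m (i - 1) - vext N y (i - 1))

lemma fitErr_eq_range (N : ℕ) (y m : Fin N → ℝ) :
    fitErr N y m = ∑ i ∈ range N, (vext N y i - vext N m i)^2 := by
  rw [fitErr, ← Fin.sum_univ_eq_sum_range (fun i => (vext N y i - vext N m i)^2) N]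
  exact Finset.sum_congr rfl fun i _ => by simp [vext, i.isLt]

lemma Spartial_eq_range (N : ℕ) (y m : Fin N → ℝ) (t : ℕ) :
    Spartial N y m t = ∑ i ∈ range t, (vext N m i - vext N y i) := by
  rw [Spartial, show Finset.Icc 1 t = Finset.Ico 1 (t+1) by rfl, Finset.sum_Ico_eq_sum_range]
  simp

lemma abel_sum (a b : ℕ → ℝ) : ∀ N : ℕ, 1 ≤ N →
    ∑ i ∈ range N, a i * b i
      = (∑ t ∈ Ico 1 N, (∑ i ∈ range t, a i) * (b (t-1) - b t))
        + (∑ i ∈ range N, a i) * b (N-1) := by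
  intro N
  induction N with
  | zero => omega
  | succ n ih =>
    intro _
    rcases Nat.lt_or_ge n 1 with h | hn
    · have : n = 0 := by omega
      subst this; simp
    · rw [Finset.sum_range_succ, ih hn, Finset.sum_Ico_succ_top hn, Finset.sum_range_succ]
      simp only [Nat.add_sub_cancel]
      ring

lemma Gobj_sub (N : ℕ) (lam : ℝ) (y m m' : Fin N → ℝ) :
    Gobj N lam y m' - Gobj N lam y m
      = (1/2) * ∑ i ∈ range N, (vext N m' i - vext N m i)^2
        + ∑ i ∈ range N, (vext N m i - vext N y i) * (vext N m' i - vext N m i)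
        + lam * ∑ t ∈ Ico 1 N,
            (|vext N m' t - vext N m' (t-1)| - |vext N m t - vext N m (t-1)|) := by
  have hA : (1:ℝ)/2 * ∑ i ∈ range N, (vext N y i - vext N m' i)^2
      = (1/2) * ∑ i ∈ range N, (vext N m' i - vext N m i)^2
        + ∑ i ∈ range N, (vext N m i - vext N y i) * (vext N m' i - vext N m i)
        + (1/2) * ∑ i ∈ range N, (vext N y i - vext N m i)^2 := by
    rw [Finset.mul_sum, Finset.mul_sum, Finset.mul_sum, ← Finset.sum_add_distrib,
      ← Finset.sum_add_distrib]
    exact Finset.sum_congr rfl fun i _ => by ring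
  have hB : lam * ∑ t ∈ Ico 1 N, |vext N m' t - vext N m' (t-1)|
      = lam * ∑ t ∈ Ico 1 N,
            (|vext N m' t - vext N m' (t-1)| - |vext N m t - vext N m (t-1)|)
        + lam * ∑ t ∈ Ico 1 N, |vext N m t - vext N m (t-1)| := by
    rw [← mul_add, ← Finset.sum_add_distrib]
    congr 1
    exact Finset.sum_congr rfl fun t _ => by ring
  rw [Gobj, Gobj, fitErr_eq_range, fitErr_eq_range, hA, hB]
  ring

lemma quad_zero (a c : ℝ) (hc : 0 < c) (h : ∀ ε : ℝ, 0 ≤ a * ε + c * ε^2) : a = 0 := by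
  have key : a * (-(a / (2*c))) + c * (-(a / (2*c)))^2 = -(a^2 / (4*c)) := by
    field_simp; ring
  have h1 := h (-(a / (2*c)))
  rw [key] at h1
  have h2 : 0 ≤ a^2 / (4*c) := by positivity
  have h3 : a^2 / (4*c) = 0 := le_antisymm (by linarith) h2
  field_simp at h3; exact (pow_eq_zero_iff two_ne_zero).mp (by rw [h3]; ring)

lemma quad_abs_le (a c lam : ℝ) (hc : 0 < c)
    (h : ∀ ε : ℝ, 0 ≤ a * ε + c * ε^2 + lam * |ε|) : |a| ≤ lam := by
  rw [abs_le]
  constructor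
  · by_contra h'
    push_neg at h'
    have hε : 0 < (-lam - a) / (2*c) := div_pos (by linarith) (by linarith)
    have h1 := h ((-lam - a) / (2*c))
    rw [abs_of_pos hε] at h1
    have key : a * ((-lam - a) / (2*c)) + c * ((-lam - a) / (2*c))^2
        + lam * ((-lam - a) / (2*c)) = ((-lam - a) / (2*c)) * ((a + lam)/2) := by
      field_simp; ring
    rw [key] at h1
    nlinarith
  · by_contra h'
    push_neg at h'
    have hε : 0 < (a - lam) / (2*c) := div_pos (by linarith) (by linarith)
    have h1 := h (-((a - lam) / (2*c)))
    rw [abs_neg, abs_of_pos hε] at h1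
    have key : a * (-((a - lam) / (2*c))) + c * (-((a - lam) / (2*c)))^2
        + lam * ((a - lam) / (2*c)) = ((a - lam) / (2*c)) * ((lam - a)/2) := by
      field_simp; ring
    rw [key] at h1
    nlinarith

lemma quad_local_zero (a c δ : ℝ) (hc : 0 < c) (hδ : 0 < δ)
    (h : ∀ ε : ℝ, |ε| ≤ δ → 0 ≤ a * ε + c * ε^2) : a = 0 := by
  rcases lt_trichotomy a 0 with ha | ha | ha
  · exfalso
    have hpos : 0 < (-a) / (2*c) := div_pos (by linarith) (by linarith)
    set η := min δ ((-a) / (2*c)) with hηdef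
    have hη1 : η ≤ δ := min_le_left _ _
    have hη2 : η ≤ (-a) / (2*c) := min_le_right _ _
    have hηpos : 0 < η := lt_min hδ hpos
    have h1 := h η (by rw [abs_of_pos hηpos]; exact hη1)
    have h2 : c * η ≤ (-a) / 2 := by
      rw [le_div_iff₀ (by linarith : (0:ℝ) < 2*c)] at hη2
      nlinarith
    nlinarith
  · exact ha
  · exfalso
    have hpos : 0 < a / (2*c) := div_pos ha (by linarith)
    set η := min δ (a / (2*c)) with hηdef
    have hη1 : η ≤ δ := min_le_left _ _
    have hη2 : η ≤ a / (2*c) := min_le_right _ _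
    have hηpos : 0 < η := lt_min hδ hpos
    have h1 := h (-η) (by rw [abs_neg, abs_of_pos hηpos]; exact hη1)
    have h2 : c * η ≤ a / 2 := by
      rw [le_div_iff₀ (by linarith : (0:ℝ) < 2*c)] at hη2
      nlinarith
    nlinarith

theorem tv_denoising_optimality_conditions
    (N : ℕ) (hN : 2 ≤ N) (y : Fin N → ℝ) (lam : ℝ) (hlam : 0 ≤ lam)
    (m : Fin N → ℝ) :
    (∀ m' : Fin N → ℝ, Gobj N lam y m ≤ Gobj N lam y m') ↔
      (Spartial N y m N = 0 ∧
       (∀ t : ℕ, 1 ≤ t → t ≤ N - 1 → |Spartial N y m t| ≤ lam) ∧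
       (∀ t : ℕ, 1 ≤ t → t ≤ N - 1 → vext N m t ≠ vext N m (t - 1) →
         Spartial N y m t = lam * Real.sign (vext N m t - vext N m (t - 1)))) := by
  have hN1 : 1 ≤ N := by omega
  constructor
  · -- minimizer ⇒ conditions
    intro H
    -- Condition 1 : S_N = 0
    have hC1 : Spartial N y m N = 0 := by
      have key : ∀ ε : ℝ, 0 ≤ Spartial N y m N * ε + ((N:ℝ)/2) * ε^2 := by
        intro ε
        have h0 : (0:ℝ) ≤ Gobj N lam y (fun i => m i + ε) - Gobj N lam y m :=
          sub_nonneg.mpr (H _)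
        rw [Gobj_sub] at h0
        have q1 : ∑ i ∈ range N, (vext N (fun i => m i + ε) i - vext N m i)^2
            = (N:ℝ) * ε^2 := by
          rw [Finset.sum_congr rfl (fun i hi => by
            simp [vext, mem_range.mp hi] : ∀ i ∈ range N,
              (vext N (fun i => m i + ε) i - vext N m i)^2 = ε^2)]
          simp [mul_comm]
        have q2 : ∑ i ∈ range N, (vext N m i - vext N y i) *
              (vext N (fun i => m i + ε) i - vext N m i)
            = Spartial N y m N * ε := by
          rw [Spartial_eq_range, Finset.sum_mul]
          refine Finset.sum_congr rfl fun i hi => ?_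
          simp [vext, mem_range.mp hi]
        have q3 : ∑ t ∈ Ico 1 N,
              (|vext N (fun i => m i + ε) t - vext N (fun i => m i + ε) (t-1)|
                - |vext N m t - vext N m (t-1)|) = 0 := by
          refine Finset.sum_eq_zero fun s hs => ?_
          obtain ⟨hs1, hs2⟩ := mem_Ico.mp hs
          have hs3 : s - 1 < N := by omega
          simp only [vext, dif_pos hs2, dif_pos hs3]
          ring_nf
        rw [q1, q2, q3] at h0
        nlinarith [h0]
      exact quad_zero _ _ (by positivity) (fun ε => key ε)
    -- main perturbation inequality for 1 ≤ t ≤ N-1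
    have main : ∀ t : ℕ, 1 ≤ t → t ≤ N - 1 → ∀ ε : ℝ,
        0 ≤ Spartial N y m t * ε + ((t:ℝ)/2) * ε^2
          + lam * (|vext N m t - vext N m (t-1) - ε| - |vext N m t - vext N m (t-1)|) := by
      intro t ht1 ht2 ε
      have htN : t < N := by omega
      have h0 : (0:ℝ) ≤ Gobj N lam y (fun i => m i + if (i:ℕ) < t then ε else 0)
          - Gobj N lam y m := sub_nonneg.mpr (H _)
      rw [Gobj_sub] at h0
      have hvext : ∀ j : ℕ, vext N (fun i => m i + if (i:ℕ) < t then ε else 0) j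
          = vext N m j + if j < t then ε else 0 := by
        intro j
        by_cases hj : j < N
        · simp [vext, hj]
        · have : ¬ j < t := by omega
          simp [vext, hj, this]
      have q1 : ∑ i ∈ range N,
            (vext N (fun i => m i + if (i:ℕ) < t then ε else 0) i - vext N m i)^2
          = (t:ℝ) * ε^2 := by
        have e : ∀ i ∈ range N,
            (vext N (fun i => m i + if (i:ℕ) < t then ε else 0) i - vext N m i)^2
              = if i < t then ε^2 else 0 := by
          intro i _
          rw [hvext i]
          by_cases hi : i < t <;> simp [hi]
        rw [Finset.sum_congr rfl e, Finset.range_eq_Ico,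
          ← Finset.sum_Ico_consecutive _ (Nat.zero_le t) (le_of_lt htN)]
        have z1 : ∑ i ∈ Ico t N, (if i < t then ε^2 else 0) = 0 :=
          Finset.sum_eq_zero fun i hi => if_neg (by have := (mem_Ico.mp hi).1; omega)
        have p1 : ∑ i ∈ Ico 0 t, (if i < t then ε^2 else 0) = ∑ i ∈ Ico 0 t, ε^2 :=
          Finset.sum_congr rfl fun i hi => if_pos (mem_Ico.mp hi).2
        rw [z1, p1, add_zero, ← Finset.range_eq_Ico]
        simp [mul_comm]
      have q2 : ∑ i ∈ range N, (vext N m i - vext N y i) *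
            (vext N (fun i => m i + if (i:ℕ) < t then ε else 0) i - vext N m i)
          = Spartial N y m t * ε := by
        have e : ∀ i ∈ range N, (vext N m i - vext N y i) *
            (vext N (fun i => m i + if (i:ℕ) < t then ε else 0) i - vext N m i)
              = if i < t then (vext N m i - vext N y i) * ε else 0 := by
          intro i _
          rw [hvext i]
          by_cases hi : i < t <;> simp [hi]
        rw [Finset.sum_congr rfl e, Finset.range_eq_Ico,
          ← Finset.sum_Ico_consecutive _ (Nat.zero_le t) (le_of_lt htN)]
        have z1 : ∑ i ∈ Ico t N, (if i < t then (vext N m i - vext N y i) * ε else 0) = 0 :=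
          Finset.sum_eq_zero fun i hi => if_neg (by have := (mem_Ico.mp hi).1; omega)
        have p1 : ∑ i ∈ Ico 0 t, (if i < t then (vext N m i - vext N y i) * ε else 0)
            = ∑ i ∈ Ico 0 t, (vext N m i - vext N y i) * ε :=
          Finset.sum_congr rfl fun i hi => if_pos (mem_Ico.mp hi).2
        rw [z1, p1, add_zero, ← Finset.range_eq_Ico, Spartial_eq_range, ← Finset.sum_mul]
      have q3 : ∑ s ∈ Ico 1 N,
            (|vext N (fun i => m i + if (i:ℕ) < t then ε else 0) s
                - vext N (fun i => m i + if (i:ℕ) < t then ε else 0) (s-1)|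
              - |vext N m s - vext N m (s-1)|)
          = |vext N m t - vext N m (t-1) - ε| - |vext N m t - vext N m (t-1)| := by
        rw [Finset.sum_eq_single_of_mem t (mem_Ico.mpr ⟨ht1, htN⟩)]
        · rw [hvext t, hvext (t-1), if_neg (lt_irrefl t), if_pos (by omega : t - 1 < t)]
          ring_nf
        · intro s hs hst
          obtain ⟨hs1, hs2⟩ := mem_Ico.mp hs
          rw [hvext s, hvext (s-1)]
          have : (if s < t then ε else 0) = (if s - 1 < t then ε else 0) :=
            if_congr (by omega) rfl rfl
          rw [this]
          ring_nf
      rw [q1, q2, q3] at h0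
      nlinarith [h0]
    -- Condition 3
    have hC3 : ∀ t : ℕ, 1 ≤ t → t ≤ N - 1 → vext N m t ≠ vext N m (t - 1) →
        Spartial N y m t = lam * Real.sign (vext N m t - vext N m (t - 1)) := by
      intro t ht1 ht2 hd
      set d := vext N m t - vext N m (t-1) with hddef
      have hdne : d ≠ 0 := sub_ne_zero.mpr hd
      have habs : ∀ ε : ℝ, |ε| ≤ |d| / 2 → |d - ε| - |d| = -(Real.sign d * ε) := by
        intro ε hε
        rcases lt_trichotomy d 0 with h1 | h1 | h1
        · rw [Real.sign_of_neg h1, abs_of_neg h1]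
          rw [abs_of_neg h1] at hε
          have hε2 := abs_le.mp hε
          rw [abs_of_neg (by linarith : d - ε < 0)]
          ring
        · exact absurd h1 hdne
        · rw [Real.sign_of_pos h1, abs_of_pos h1]
          rw [abs_of_pos h1] at hε
          have hε2 := abs_le.mp hε
          rw [abs_of_pos (by linarith : 0 < d - ε)]
          ring
      have key : ∀ ε : ℝ, |ε| ≤ |d| / 2 →
          0 ≤ (Spartial N y m t - lam * Real.sign d) * ε + ((t:ℝ)/2) * ε^2 := by
        intro ε hε
        have := main t ht1 ht2 ε
        rw [habs ε hε] at this
        nlinarith [this]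
      have ht0 : (0:ℝ) < (t:ℝ)/2 := by
        have : (1:ℝ) ≤ (t:ℝ) := by exact_mod_cast ht1
        linarith
      have hδ : (0:ℝ) < |d| / 2 := by
        have : 0 < |d| := abs_pos.mpr hdne
        linarith
      have := quad_local_zero _ _ _ ht0 hδ key
      linarith
    -- Condition 2
    have hC2 : ∀ t : ℕ, 1 ≤ t → t ≤ N - 1 → |Spartial N y m t| ≤ lam := by
      intro t ht1 ht2
      by_cases hd : vext N m t = vext N m (t-1)
      · have key : ∀ ε : ℝ,
            0 ≤ Spartial N y m t * ε + ((t:ℝ)/2) * ε^2 + lam * |ε| := by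
          intro ε
          have := main t ht1 ht2 ε
          rw [show vext N m t - vext N m (t-1) = 0 by rw [hd]; ring] at this
          simpa using this
        have ht0 : (0:ℝ) < (t:ℝ)/2 := by
          have : (1:ℝ) ≤ (t:ℝ) := by exact_mod_cast ht1
          linarith
        exact quad_abs_le _ _ _ ht0 key
      · rw [hC3 t ht1 ht2 hd, abs_mul, abs_of_nonneg hlam]
        have hdne : vext N m t - vext N m (t-1) ≠ 0 := sub_ne_zero.mpr hd
        have : |Real.sign (vext N m t - vext N m (t-1))| = 1 := by
          rcases lt_trichotomy (vext N m t - vext N m (t-1)) 0 with h1 | h1 | h1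
          · rw [Real.sign_of_neg h1]; norm_num
          · exact absurd h1 hdne
          · rw [Real.sign_of_pos h1]; norm_num
        rw [this, mul_one]
    exact ⟨hC1, hC2, hC3⟩
  · -- conditions ⇒ minimizer
    rintro ⟨hC1, hC2, hC3⟩ m'
    rw [← sub_nonneg, Gobj_sub]
    have habel : ∑ i ∈ range N, (vext N m i - vext N y i) * (vext N m' i - vext N m i)
        = (∑ t ∈ Ico 1 N, (∑ i ∈ range t, (vext N m i - vext N y i)) *
            ((vext N m' (t-1) - vext N m (t-1)) - (vext N m' t - vext N m t)))
          + (∑ i ∈ range N, (vext N m i - vext N y i)) *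
              (vext N m' (N-1) - vext N m (N-1)) :=
      abel_sum (fun i => vext N m i - vext N y i)
        (fun i => vext N m' i - vext N m i) N hN1
    have hSN : ∑ i ∈ range N, (vext N m i - vext N y i) = 0 := by
      rw [← Spartial_eq_range]; exact hC1
    rw [hSN, zero_mul, add_zero] at habel
    rw [habel]
    have hcomb : (∑ t ∈ Ico 1 N, (∑ i ∈ range t, (vext N m i - vext N y i)) *
          ((vext N m' (t-1) - vext N m (t-1)) - (vext N m' t - vext N m t)))
        + lam * ∑ t ∈ Ico 1 N,
            (|vext N m' t - vext N m' (t-1)| - |vext N m t - vext N m (t-1)|)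
        = ∑ t ∈ Ico 1 N,
            ((∑ i ∈ range t, (vext N m i - vext N y i)) *
              ((vext N m' (t-1) - vext N m (t-1)) - (vext N m' t - vext N m t))
            + lam * (|vext N m' t - vext N m' (t-1)| - |vext N m t - vext N m (t-1)|)) := by
      rw [Finset.mul_sum, ← Finset.sum_add_distrib]
    have hterm : ∀ t ∈ Ico 1 N,
        0 ≤ (∑ i ∈ range t, (vext N m i - vext N y i)) *
              ((vext N m' (t-1) - vext N m (t-1)) - (vext N m' t - vext N m t))
            + lam * (|vext N m' t - vext N m' (t-1)| - |vext N m t - vext N m (t-1)|) := by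
      intro t ht
      obtain ⟨ht1, ht2⟩ := mem_Ico.mp ht
      have ht2' : t ≤ N - 1 := by omega
      have hSeq : (∑ i ∈ range t, (vext N m i - vext N y i)) = Spartial N y m t :=
        (Spartial_eq_range N y m t).symm
      set S := Spartial N y m t with hSdef
      set d := vext N m t - vext N m (t-1) with hd
      set d' := vext N m' t - vext N m' (t-1) with hd'
      have hb : (vext N m' (t-1) - vext N m (t-1)) - (vext N m' t - vext N m t)
          = d - d' := by rw [hd, hd']; ring
      rw [hSeq, hb]
      have h1 : S * d = lam * |d| := by
        by_cases hd0 : d = 0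
        · rw [hd0]; simp
        · have hne : vext N m t ≠ vext N m (t-1) := fun h => hd0 (by rw [hd, h]; ring)
          have := hC3 t ht1 ht2' hne
          rw [hSdef] at *
          rw [this]
          rcases lt_trichotomy d 0 with hh | hh | hh
          · rw [Real.sign_of_neg hh, abs_of_neg hh]; ring
          · exact absurd hh hd0
          · rw [Real.sign_of_pos hh, abs_of_pos hh]; ring
      have h2 : S * d' ≤ lam * |d'| := by
        calc S * d' ≤ |S * d'| := le_abs_self _
          _ = |S| * |d'| := abs_mul _ _
          _ ≤ lam * |d'| := mul_le_mul_of_nonneg_right (hC2 t ht1 ht2') (abs_nonneg _)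
      nlinarith [h1, h2]
    have hsum := Finset.sum_nonneg hterm
    have hsq : 0 ≤ ∑ i ∈ range N, (vext N m' i - vext N m i)^2 :=
      Finset.sum_nonneg fun i _ => sq_nonneg _
    rw [← hcomb] at hsum
    linarith [hsum, hsq]
end
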